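/- arXiv:1107.1435 — 2 statements merged into one kernel-verified Lean document; each statement's English description precedes it below -/
import Mathlib

section
/- If μ and λ are infinite cardinals with 2^μ ≤ λ, then the Tychonoff product of any family of weakly initially λ-compact topological spaces is weakly initially μ-compact. -/
open Cardinal Set

universe u v

/-- `x` is a `D`-limit point of the family of sets `O`. -/
def DLimitSets {X : Type u} {I : Type v} [TopologicalSpace X]
    (D : Ultrafilter I) (O : I → Set X) (x : X) : Prop :=
  ∀ U ∈ nhds x, {i | (U ∩ O i).Nonempty} ∈ D

/-- `X` is `D`-pseudocompact. -/
def DPseudocompact (X : Type u) {I : Type v} [TopologicalSpace X]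
    (D : Ultrafilter I) : Prop :=
  ∀ O : I → Set X, (∀ i, IsOpen (O i)) → (∀ i, (O i).Nonempty) →
    ∃ x : X, DLimitSets D O x

/-- Every open cover of cardinality at most `lam` has a finite subfamily with dense union. -/
def WeaklyInitiallyCompact (X : Type u) [TopologicalSpace X] (lam : Cardinal.{u}) : Prop :=
  ∀ 𝒰 : Set (Set X), (∀ U ∈ 𝒰, IsOpen U) → ⋃₀ 𝒰 = Set.univ →
    Cardinal.mk 𝒰 ≤ lam →
    ∃ t : Finset (Set X), ↑t ⊆ 𝒰 ∧ Dense (⋃₀ (t : Set (Set X)))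

/-- A regular ultrafilter over `I` (regular of degree `|I|`): there is an `I`-indexed
family of members of `D` every infinite subfamily of which has empty intersection. -/
def RegularUltrafilter {I : Type v} (D : Ultrafilter I) : Prop :=
  ∃ Z : I → Set I, (∀ i, Z i ∈ D) ∧
    ∀ S : Set I, S.Infinite → ⋂ i ∈ S, Z i = ∅

/-
Pass through ultrafilter pseudocompactness, for a regular ultrafilter `D` over a set of size `μ`.
A weakly initially `2^μ`-compact space is `D`-pseudocompact: if nonempty open sets `O i` had no
`D`-limit point, every point would have an open neighbourhood missing `O i` for `D`-many `i`;
grouping these neighbourhoods by that set of indices gives an open cover of size at most `2^μ`,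
and for `i` in each of the finitely many index sets of a dense finite subfamily, `O i` would have
to meet a neighbourhood it misses. `D`-pseudocompactness is productive, since `D`-limits of
basic open boxes can be found coordinatewise. Finally, a `D`-pseudocompact space is weakly
initially `μ`-compact: if no finite union of a cover `(U j)` is dense, regularity gives for each
`i` a finite set of indices `j` and a nonempty open `O i` missing their union, and a `D`-limit
point of `(O i)` contradicts the point-finiteness of the regularity witness.
-/

open Filter

theorem regularUltrafilter_iff {I : Type v} {D : Ultrafilter I} :
    RegularUltrafilter D ↔ ∃ Z : I → Set I, (∀ i, Z i ∈ D) ∧ ∀ i, {j | i ∈ Z j}.Finite := by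
  refine exists_congr fun Z => and_congr_right fun _ => ⟨fun h i => ?_, fun h S hS => ?_⟩
  · by_contra hinf
    have hi : i ∈ ⋂ j ∈ {j | i ∈ Z j}, Z j := mem_iInter₂.2 fun _ hj => hj
    rwa [h _ hinf] at hi
  · refine eq_empty_iff_forall_notMem.2 fun i hi => hS ((h i).subset fun j hj => ?_)
    exact mem_iInter₂.1 hi j hj

/-- On the finite subsets of a set `K` of size `μ`, the sets `{s | a ∈ s}` (`a ∈ K`) lie in any
ultrafilter finer than `atTop`, and each `s` belongs to only finitely many of them. -/
theorem exists_regularUltrafilter {mu : Cardinal.{u}} (hmu : ℵ₀ ≤ mu) :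
    ∃ (I : Type u) (D : Ultrafilter I), #I = mu ∧ RegularUltrafilter D := by
  have hK : #mu.out = mu := mk_out mu
  have : Infinite mu.out := infinite_iff.2 (by rwa [hK])
  obtain ⟨e⟩ := Cardinal.eq.1 (mk_finset_of_infinite mu.out)
  refine ⟨Finset mu.out, Ultrafilter.of atTop, by rw [mk_finset_of_infinite, hK], ?_⟩
  refine regularUltrafilter_iff.2 ⟨fun t => {s | e t ∈ s}, fun t => ?_, fun s => ?_⟩
  · exact Ultrafilter.of_le atTop <| (eventually_ge_atTop {e t}).mono fun s hs =>
      Finset.singleton_subset_iff.1 hs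
  · exact s.finite_toSet.preimage e.injective.injOn

section

variable {X : Type u} [TopologicalSpace X]

theorem dLimitSets_iff_forall_isOpen {I : Type v} {D : Ultrafilter I} {O : I → Set X} {x : X} :
    DLimitSets D O x ↔ ∀ U, IsOpen U → x ∈ U → {i | (U ∩ O i).Nonempty} ∈ D :=
  ⟨fun h U hU hxU => h U (hU.mem_nhds hxU), fun h V hV => by
    obtain ⟨U, hUV, hU, hxU⟩ := mem_nhds_iff.1 hV
    exact mem_of_superset (h U hU hxU) fun i hi => hi.mono (inter_subset_inter_left _ hUV)⟩

theorem DLimitSets.mono {I : Type v} {D : Ultrafilter I} {O O' : I → Set X} {x : X}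
    (h : DLimitSets D O x) (hO : ∀ i, O i ⊆ O' i) : DLimitSets D O' x :=
  fun U hU => mem_of_superset (h U hU) fun i hi => hi.mono (inter_subset_inter_right _ (hO i))

theorem WeaklyInitiallyCompact.exists_finset_dense_iUnion {lam : Cardinal.{u}}
    (h : WeaklyInitiallyCompact X lam) {ι : Type u} {V : ι → Set X} (hV : ∀ i, IsOpen (V i))
    (hcover : ⋃ i, V i = Set.univ) (hcard : #ι ≤ lam) : ∃ s : Finset ι, Dense (⋃ i ∈ s, V i) := by
  classical
  obtain ⟨t, ht, hdense⟩ := h (range V) (forall_mem_range.2 hV) (by rwa [sUnion_range])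
    (mk_range_le.trans hcard)
  obtain ⟨s, -, rfl⟩ := Finset.subset_set_image_iff.1 (image_univ ▸ ht)
  rw [Finset.coe_image, sUnion_image, Finset.set_biUnion_coe] at hdense
  exact ⟨s, hdense⟩

theorem WeaklyInitiallyCompact.dPseudocompact {lam : Cardinal.{u}}
    (h : WeaklyInitiallyCompact X lam) {I : Type u} (D : Ultrafilter I) (hcard : 2 ^ #I ≤ lam) :
    DPseudocompact X D := by
  intro O hO hne
  by_contra! hno
  have hnbhd : ∀ x, ∃ U, IsOpen U ∧ x ∈ U ∧ {i | (U ∩ O i).Nonempty}ᶜ ∈ D := by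
    intro x
    simpa only [dLimitSets_iff_forall_isOpen, Ultrafilter.compl_mem_iff_notMem, not_forall,
      exists_prop] using hno x
  choose U hUo hxU hUD using hnbhd
  let A : X → Set I := fun x => {i | (U x ∩ O i).Nonempty}ᶜ
  let V : (D : Filter I).sets → Set X := fun B => ⋃ (x) (_ : A x = B), U x
  have hcover : ⋃ B, V B = Set.univ :=
    eq_univ_of_forall fun x => mem_iUnion.2 ⟨⟨A x, hUD x⟩, mem_biUnion rfl (hxU x)⟩
  have hcardV : #(D : Filter I).sets ≤ lam := (mk_set_le _).trans (by rwa [mk_set])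
  obtain ⟨s, hs⟩ := h.exists_finset_dense_iUnion (fun B => isOpen_biUnion fun x _ => hUo x)
    hcover hcardV
  obtain ⟨i, hi⟩ := Filter.nonempty_of_mem <| (biInter_finset_mem s).2 fun B _ => B.2
  obtain ⟨y, hyO, hyV⟩ := (dense_iff_inter_open.1 hs _ (hO i) (hne i))
  simp only [mem_iUnion, exists_prop] at hyV
  obtain ⟨B, hB, x, hxB, hyU⟩ := hyV
  exact (hxB ▸ mem_iInter₂.1 hi B hB : i ∈ A x) ⟨y, hyU, hyO⟩

theorem DPseudocompact.exists_finset_dense_iUnion {I : Type v} {D : Ultrafilter I}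
    (h : DPseudocompact X D) (hreg : RegularUltrafilter D) {U : I → Set X}
    (hU : ∀ i, IsOpen (U i)) (hcover : ⋃ i, U i = Set.univ) :
    ∃ s : Finset I, Dense (⋃ j ∈ s, U j) := by
  obtain ⟨Z, hZD, hZfin⟩ := regularUltrafilter_iff.1 hreg
  by_contra! hnd
  have hgap : ∀ i, ∃ O, IsOpen O ∧ O.Nonempty ∧ O ∩ ⋃ j ∈ (hZfin i).toFinset, U j = ∅ := by
    intro i
    simpa only [dense_iff_inter_open, not_forall, not_nonempty_iff_eq_empty, exists_prop]
      using hnd (hZfin i).toFinset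
  choose O hOo hOne hO using hgap
  obtain ⟨x, hx⟩ := h O hOo hOne
  obtain ⟨j, hxj⟩ := mem_iUnion.1 (hcover.symm ▸ mem_univ x : x ∈ ⋃ i, U i)
  obtain ⟨i, ⟨y, hyU, hyO⟩, hij⟩ := Filter.nonempty_of_mem <|
    inter_mem (hx (U j) ((hU j).mem_nhds hxj)) (hZD j)
  have hy : y ∈ O i ∩ ⋃ j ∈ (hZfin i).toFinset, U j :=
    ⟨hyO, mem_biUnion ((hZfin i).mem_toFinset.2 hij) hyU⟩
  rwa [hO i] at hy

theorem RegularUltrafilter.weaklyInitiallyCompact {I : Type u} {D : Ultrafilter I}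
    (hreg : RegularUltrafilter D) (h : DPseudocompact X D) : WeaklyInitiallyCompact X #I := by
  classical
  intro 𝒰 hopen hcover hcard
  rcases isEmpty_or_nonempty X with hX | ⟨⟨x⟩⟩
  · exact ⟨∅, by simp, fun x => isEmptyElim x⟩
  obtain ⟨U₀, hU₀, -⟩ := mem_sUnion.1 (hcover.symm ▸ mem_univ x : x ∈ ⋃₀ 𝒰)
  have : Nonempty 𝒰 := ⟨⟨U₀, hU₀⟩⟩
  obtain ⟨emb⟩ := hcard
  obtain ⟨f, hf⟩ : ∃ f : I → 𝒰, f.Surjective := ⟨_, Function.invFun_surjective emb.injective⟩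
  obtain ⟨s, hs⟩ := h.exists_finset_dense_iUnion hreg (fun i => hopen _ (f i).2)
    (by rwa [hf.iUnion_comp fun U : 𝒰 => (U : Set X), ← sUnion_eq_iUnion])
  refine ⟨s.image fun i => (f i : Set X), ?_, ?_⟩
  · simp only [Finset.coe_image, image_subset_iff]
    exact fun i _ => (f i).2
  · rwa [Finset.coe_image, sUnion_image]

end

section

variable {J : Type u} {X : J → Type u} [∀ j, TopologicalSpace (X j)]

theorem exists_pi_univ_subset_of_isOpen {O : Set (∀ j, X j)} (hO : IsOpen O) (hne : O.Nonempty) :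
    ∃ W : ∀ j, Set (X j), (∀ j, IsOpen (W j) ∧ (W j).Nonempty) ∧ Set.univ.pi W ⊆ O := by
  classical
  obtain ⟨p, hp⟩ := hne
  obtain ⟨F, u, hu, hFu⟩ := isOpen_pi_iff.1 hO p hp
  refine ⟨fun j => if j ∈ (F : Set J) then u j else Set.univ, fun j => ?_, by rwa [pi_univ_ite]⟩
  dsimp only
  split_ifs with hj
  exacts [⟨(hu j hj).1, p j, (hu j hj).2⟩, ⟨isOpen_univ, p j, trivial⟩]

theorem dLimitSets_pi_univ {I : Type v} {D : Ultrafilter I} {W : ∀ j, I → Set (X j)}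
    (hW : ∀ j i, (W j i).Nonempty) {x : ∀ j, X j} (hx : ∀ j, DLimitSets D (W j) (x j)) :
    DLimitSets D (fun i => Set.univ.pi fun j => W j i) x := by
  intro N hN
  rw [nhds_pi, Filter.mem_pi] at hN
  obtain ⟨F, hF, t, ht, hFt⟩ := hN
  refine mem_of_superset ((biInter_mem hF).2 fun j _ => hx j (t j) (ht j)) fun i hi => ?_
  have hq : ∀ j, ∃ y ∈ W j i, j ∈ F → y ∈ t j := fun j => by
    by_cases hj : j ∈ F
    · obtain ⟨y, hyt, hyW⟩ := mem_iInter₂.1 hi j hj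
      exact ⟨y, hyW, fun _ => hyt⟩
    · exact (hW j i).imp fun y hy => ⟨hy, fun hj' => absurd hj' hj⟩
  choose q hqW hqt using hq
  exact ⟨q, hFt hqt, fun j _ => hqW j⟩

theorem DPseudocompact.pi {I : Type v} {D : Ultrafilter I} (h : ∀ j, DPseudocompact (X j) D) :
    DPseudocompact (∀ j, X j) D := by
  intro O hO hne
  choose W hW hWO using fun i => exists_pi_univ_subset_of_isOpen (hO i) (hne i)
  choose x hx using fun j => h j (fun i => W i j) (fun i => (hW i j).1) (fun i => (hW i j).2)
  exact ⟨x, (dLimitSets_pi_univ (fun j i => (hW i j).2) hx).mono hWO⟩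

end

theorem product_weaklyInitiallyCompact_general (mu lam : Cardinal.{u})
    (hmu : Cardinal.aleph0 ≤ mu)
    (h2 : 2 ^ mu ≤ lam)
    {J : Type u} {X : J → Type u} [∀ j, TopologicalSpace (X j)]
    (hX : ∀ j, WeaklyInitiallyCompact (X j) lam) :
    WeaklyInitiallyCompact (∀ j, X j) mu := by
  obtain ⟨I, D, rfl, hreg⟩ := exists_regularUltrafilter hmu
  exact hreg.weaklyInitiallyCompact (DPseudocompact.pi fun j => (hX j).dPseudocompact D h2)

theorem product_weaklyInitiallyCompact (mu lam : Cardinal.{u})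
    (hmu : Cardinal.aleph0 ≤ mu) (hlam : Cardinal.aleph0 ≤ lam)
    (h2 : 2 ^ mu ≤ lam)
    {J : Type u} {X : J → Type u} [∀ j, TopologicalSpace (X j)]
    (hX : ∀ j, WeaklyInitiallyCompact (X j) lam) :
    WeaklyInitiallyCompact (∀ j, X j) mu :=
  product_weaklyInitiallyCompact_general mu lam hmu h2 hX
end

section
/- If 2^μ ≤ λ for infinite cardinals μ, λ, then the Tychonoff product of any family of initially λ-compact spaces is initially μ-compact. -/
open Cardinal Set

universe u v

/-- Every open cover of cardinality at most `lam` has a finite subcover. -/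
def InitiallyCompact (X : Type u) [TopologicalSpace X] (lam : Cardinal.{u}) : Prop :=
  ∀ 𝒰 : Set (Set X), (∀ U ∈ 𝒰, IsOpen U) → ⋃₀ 𝒰 = Set.univ →
    Cardinal.mk 𝒰 ≤ lam →
    ∃ t : Finset (Set X), ↑t ⊆ 𝒰 ∧ ⋃₀ (t : Set (Set X)) = Set.univ

/-!
An initially `2 ^ #I`-compact space is `D`-compact for every ultrafilter `D` on `I`: the closures
of the images of the members of `D` are at most `2 ^ #I` closed sets with the finite intersection
property, and a common point is a `D`-limit. Limits along `D` are taken coordinatewise in a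
product, so for `#I ≤ μ` the product is `D`-compact too. Finally, if an open cover `𝒰` with
`#𝒰 ≤ μ` had no finite subcover, pick for every finite `s ⊆ 𝒰` a point outside `⋃₀ s`; this net
on the `μ`-sized set `Finset 𝒰` has no limit along an ultrafilter refining `atTop`.
-/

open Filter Topology

namespace InitiallyCompact

variable {X : Type u} [TopologicalSpace X] {lam : Cardinal.{u}}

theorem iInter_nonempty (h : InitiallyCompact X lam) {ι : Type u} (C : ι → Set X)
    (hC : ∀ i, IsClosed (C i)) (hι : #ι ≤ lam)
    (hfip : ∀ s : Finset ι, (⋂ i ∈ s, C i).Nonempty) : (⋂ i, C i).Nonempty := by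
  classical
  by_contra hempty
  have hcover : ⋃₀ range (fun i => (C i)ᶜ) = Set.univ := by
    rw [sUnion_range, ← compl_iInter, not_nonempty_iff_eq_empty.1 hempty, compl_empty]
  obtain ⟨t, hts, htu⟩ := h _ (by rintro _ ⟨i, rfl⟩; exact (hC i).isOpen_compl) hcover
    (mk_range_le.trans hι)
  rw [← image_univ, Finset.subset_set_image_iff] at hts
  obtain ⟨s, -, rfl⟩ := hts
  obtain ⟨x, hx⟩ := hfip s
  obtain ⟨_, hU, hxi⟩ := htu.ge (mem_univ x)
  obtain ⟨i, hi, rfl⟩ := Finset.mem_image.1 hU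
  exact hxi (mem_iInter₂.1 hx i hi)

theorem exists_tendsto_ultrafilter (h : InitiallyCompact X lam) {I : Type u}
    (hI : 2 ^ #I ≤ lam) (D : Ultrafilter I) (f : I → X) : ∃ x, Tendsto f D (𝓝 x) := by
  have hcard : #(D : Filter I).sets ≤ lam :=
    calc #(D : Filter I).sets ≤ #(Set I) := mk_set_le _
      _ = 2 ^ #I := mk_set
      _ ≤ lam := hI
  obtain ⟨x, hx⟩ := h.iInter_nonempty (fun A : (D : Filter I).sets => closure (f '' A))
    (fun _ => isClosed_closure) hcard fun s => by
      obtain ⟨i, hi⟩ := (D : Filter I).nonempty_of_mem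
        ((biInter_finset_mem s).2 fun A _ => A.2)
      exact ⟨f i, mem_iInter₂.2 fun A hA => subset_closure ⟨i, mem_iInter₂.1 hi A hA, rfl⟩⟩
  have hcluster : ClusterPt x (map f D) :=
    ((D : Filter I).basis_sets.map f).clusterPt_iff_forall_mem_closure.2
      fun A hA => mem_iInter.1 hx ⟨A, hA⟩
  exact ⟨x, (Ultrafilter.clusterPt_iff (f := D.map f)).1 (by rwa [Ultrafilter.coe_map])⟩

end InitiallyCompact

theorem initiallyCompact_of_forall_exists_tendsto {Y : Type u} [TopologicalSpace Y]
    {mu : Cardinal.{u}} (hmu : ℵ₀ ≤ mu)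
    (h : ∀ (I : Type u), #I ≤ mu → ∀ (D : Ultrafilter I) (f : I → Y), ∃ y, Tendsto f D (𝓝 y)) :
    InitiallyCompact Y mu := by
  classical
  intro 𝒰 hopen hcover hcard
  by_contra! hnot
  have hpoint : ∀ s : Finset 𝒰, ∃ y, ∀ U ∈ s, y ∉ (U : Set Y) := fun s => by
    obtain ⟨y, hy⟩ := (ne_univ_iff_exists_notMem _).1
      (hnot (s.image Subtype.val) fun U hU => by
        obtain ⟨V, -, rfl⟩ := Finset.mem_image.1 hU
        exact V.2)
    exact ⟨y, fun U hU hyU => hy ⟨U, by simpa using hU, hyU⟩⟩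
  choose f hf using hpoint
  have hI : #(Finset 𝒰) ≤ mu :=
    (mk_le_of_surjective List.toFinset_surjective).trans
      ((mk_list_le_max _).trans (max_le hmu hcard))
  let D := Ultrafilter.of (atTop : Filter (Finset 𝒰))
  obtain ⟨y, hy⟩ := h _ hI D f
  obtain ⟨U, hU, hyU⟩ := hcover.ge (mem_univ y)
  obtain ⟨s, hsU, hUs⟩ := (D : Filter (Finset 𝒰)).nonempty_of_mem
    (inter_mem (hy ((hopen U hU).mem_nhds hyU)) (Ultrafilter.of_le _ (Ici_mem_atTop {⟨U, hU⟩})))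
  exact hf s ⟨U, hU⟩ (Finset.singleton_subset_iff.1 hUs) hsU

theorem product_initiallyCompact_general (mu lam : Cardinal.{u})
    (hmu : Cardinal.aleph0 ≤ mu)
    (h2 : 2 ^ mu ≤ lam)
    {J : Type u} {X : J → Type u} [∀ j, TopologicalSpace (X j)]
    (hX : ∀ j, InitiallyCompact (X j) lam) :
    InitiallyCompact (∀ j, X j) mu := by
  refine initiallyCompact_of_forall_exists_tendsto hmu fun I hI D f => ?_
  have hcoord : ∀ j, ∃ x, Tendsto (fun i => f i j) D (𝓝 x) := fun j =>
    (hX j).exists_tendsto_ultrafilter ((power_le_power_left two_ne_zero hI).trans h2) D _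
  choose x hx using hcoord
  exact ⟨x, tendsto_pi_nhds.2 hx⟩

theorem product_initiallyCompact (mu lam : Cardinal.{u})
    (hmu : Cardinal.aleph0 ≤ mu) (hlam : Cardinal.aleph0 ≤ lam)
    (h2 : 2 ^ mu ≤ lam)
    {J : Type u} {X : J → Type u} [∀ j, TopologicalSpace (X j)]
    (hX : ∀ j, InitiallyCompact (X j) lam) :
    InitiallyCompact (∀ j, X j) mu :=
  product_initiallyCompact_general mu lam hmu h2 hX
end
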